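/- arXiv:1909.06475 — 8 statements merged into one kernel-verified Lean document; each statement's English description precedes it below -/
import Mathlib

section
/- There is no Mendelsohn triple system of order 6. -/
/-- The underlying 3-element block of a cyclic triple. -/
def mtsBlock {v : ℕ} (t : Fin v × Fin v × Fin v) : Finset (Fin v) :=
  {t.1, t.2.1, t.2.2}

/-- The multiset of ordered pairs contained in the cyclic triple `(x,y,z)`,
namely `(x,y)`, `(y,z)`, `(z,x)`. -/
def mtsPairs {v : ℕ} (t : Fin v × Fin v × Fin v) : Multiset (Fin v × Fin v) :=
  {(t.1, t.2.1), (t.2.1, t.2.2), (t.2.2, t.1)}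

/-- `T` is a Mendelsohn triple system of order `v`: a collection of cyclic
triples of distinct points such that every ordered pair of distinct points
occurs in exactly one triple. -/
def IsMTS {v : ℕ} (T : Multiset (Fin v × Fin v × Fin v)) : Prop :=
  (∀ t ∈ T, t.1 ≠ t.2.1 ∧ t.2.1 ≠ t.2.2 ∧ t.2.2 ≠ t.1) ∧
  ∀ x y : Fin v, x ≠ y → Multiset.count (x, y) (T.bind mtsPairs) = 1

/-- `xs` is an `ℓ`-good sequencing of the collection `T` of cyclic triples:
`xs` is a permutation of the point set, and for every triple `(x,y,z)` of `T`
(with positions `i`, `j`, `k` in `xs`) it is not the case that `i < j < k` with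
`k - i + 1 ≤ ℓ`, nor `j < k < i` with `i - j + 1 ≤ ℓ`, nor `k < i < j` with
`j - k + 1 ≤ ℓ`. -/
def IsGoodSeq {v : ℕ} (ℓ : ℕ) (T : Multiset (Fin v × Fin v × Fin v))
    (xs : List (Fin v)) : Prop :=
  xs.Perm (List.finRange v) ∧
  ∀ t ∈ T,
    ¬(xs.idxOf t.1 < xs.idxOf t.2.1 ∧ xs.idxOf t.2.1 < xs.idxOf t.2.2 ∧
        xs.idxOf t.2.2 - xs.idxOf t.1 + 1 ≤ ℓ) ∧
    ¬(xs.idxOf t.2.1 < xs.idxOf t.2.2 ∧ xs.idxOf t.2.2 < xs.idxOf t.1 ∧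
        xs.idxOf t.1 - xs.idxOf t.2.1 + 1 ≤ ℓ) ∧
    ¬(xs.idxOf t.2.2 < xs.idxOf t.1 ∧ xs.idxOf t.1 < xs.idxOf t.2.1 ∧
        xs.idxOf t.2.1 - xs.idxOf t.2.2 + 1 ≤ ℓ)

/-- `B` is a twofold triple system of order `v`: a multiset of 3-element
blocks such that every 2-element subset of points lies in exactly two blocks,
counted with multiplicity. -/
def IsTTS {v : ℕ} (B : Multiset (Finset (Fin v))) : Prop :=
  (∀ b ∈ B, b.card = 3) ∧
  ∀ x y : Fin v, x ≠ y → B.countP (fun b => x ∈ b ∧ y ∈ b) = 2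

/-!
An MTS on a point set is the same as an idempotent operation `op` with `op y (op x y) = x`:
`op x y = z` exactly when `(x, y, z)` is one of the cyclic triples. For a fixed point `p`, the
map `σ = op p` permutes the other points without fixed points. A 2-cycle `{a, b}` of `σ` would
make `{p, a, b}` a sub-system of order 3; but for `u` outside a sub-system `S`, the map
`s ↦ op s u` embeds `S` into the complement of `S ∪ {u}`, so there are at least `2|S| + 1` points.
With six points, `σ` is therefore a 5-cycle `y, σy, …, σ⁴y`. In it the triple through
`(σy, σ³y)` must be `(σy, σ³y, σ²y)`, as every other third point clashes with a triple through
`p`; doing the same at `σy`, the two different triples `(σy, σ³y, σ²y)` and `(σ²y, σ⁴y, σ³y)`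
both contain the ordered pair `(σ³y, σ²y)`.
-/

theorem Multiset.two_le_count_bind {β γ : Type*} [DecidableEq β] [DecidableEq γ]
    {s : Multiset β} {f : β → Multiset γ} {b b' : β} (hb : b ∈ s) (hb' : b' ∈ s) (hne : b ≠ b')
    {a : γ} (ha : a ∈ f b) (ha' : a ∈ f b') : 2 ≤ count a (s.bind f) := by
  rw [← cons_erase hb, cons_bind, ← cons_erase ((mem_erase_of_ne hne.symm).mpr hb'), cons_bind,
    count_add, count_add]
  have := count_pos.mpr ha
  have := count_pos.mpr ha'
  omega

structure IsMendelsohnOp {α : Type*} (op : α → α → α) : Prop where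
  idem : ∀ x, op x x = x
  semisymm : ∀ x y, op y (op x y) = x

namespace IsMendelsohnOp

variable {α : Type*} {op : α → α → α}

theorem rotate (h : IsMendelsohnOp op) (x y : α) : op (op x y) x = y := by
  have := h.semisymm y (op x y)
  rwa [h.semisymm x y] at this

theorem injective_left (h : IsMendelsohnOp op) (x : α) : Function.Injective (op x) :=
  fun y y' e => by rw [← h.rotate x y, e, h.rotate]

theorem injective_right (h : IsMendelsohnOp op) (y : α) : Function.Injective (op · y) :=
  fun x x' e => by rw [← h.semisymm x y, ← h.semisymm x' y]; exact congrArg (op y) e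

theorem op_ne_left (h : IsMendelsohnOp op) {x y : α} (hxy : x ≠ y) : op x y ≠ x := by
  intro e
  have hyx : op y x = x := by simpa [e] using h.semisymm x y
  exact hxy (by simpa [hyx, h.idem] using h.semisymm y x)

theorem op_ne_right (h : IsMendelsohnOp op) {x y : α} (hxy : x ≠ y) : op x y ≠ y := by
  intro e
  exact hxy (by simpa [e, h.idem] using (h.semisymm x y).symm)

theorem iterate_ne_of_ne (h : IsMendelsohnOp op) {p y : α} (hy : y ≠ p) (k : ℕ) :
    (op p)^[k] y ≠ p := by
  induction k with
  | zero => exact hy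
  | succ k ih => rw [Function.iterate_succ_apply']; exact h.op_ne_left ih.symm

theorem op_notMem_of_closed (h : IsMendelsohnOp op) {S : Set α}
    (hS : ∀ a ∈ S, ∀ b ∈ S, op a b ∈ S) {s u : α} (hs : s ∈ S) (hu : u ∉ S) : op s u ∉ S :=
  fun hsu => hu (h.rotate s u ▸ hS _ hsu _ hs)

theorem two_mul_card_add_one_le (h : IsMendelsohnOp op) [Fintype α] [DecidableEq α]
    {S : Finset α} (hS : ∀ a ∈ S, ∀ b ∈ S, op a b ∈ S) {u : α} (hu : u ∉ S) :
    2 * S.card + 1 ≤ Fintype.card α := by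
  have hmaps : Set.MapsTo (op · u) S ((insert u S)ᶜ : Finset α) := by
    intro s hs
    simp only [Finset.coe_compl, Set.mem_compl_iff, Finset.mem_coe, Finset.mem_insert, not_or]
    exact ⟨h.op_ne_right (ne_of_mem_of_not_mem hs hu),
      h.op_notMem_of_closed (S := S) hS hs hu⟩
  have hcard := Finset.card_le_card_of_injOn _ hmaps (h.injective_right u).injOn
  have hle := (insert u S).card_le_univ
  rw [Finset.card_compl, Finset.card_insert_of_notMem hu] at hcard
  rw [Finset.card_insert_of_notMem hu] at hle
  omega

theorem card_le_three_or_seven_le (h : IsMendelsohnOp op) [Fintype α] {x y : α} (hxy : x ≠ y)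
    (hyx : op x (op x y) = y) : Fintype.card α ≤ 3 ∨ 7 ≤ Fintype.card α := by
  classical
  set S : Finset α := {x, y, op x y}
  have h₁ : op y (op x y) = x := h.semisymm x y
  have h₂ : op (op x y) x = y := h.rotate x y
  have h₃ : op (op x y) y = x := by simpa [hyx] using h.semisymm x (op x y)
  have h₄ : op y x = op x y := by simpa [hyx] using h.rotate x (op x y)
  have hS : ∀ a ∈ S, ∀ b ∈ S, op a b ∈ S := by
    simp only [S, Finset.mem_insert, Finset.mem_singleton]
    rintro a (rfl | rfl | rfl) b (rfl | rfl | rfl) <;> simp [h.idem, h₁, h₂, h₃, h₄, hyx]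
  by_cases hSu : S = Finset.univ
  · left
    have : S.card ≤ 3 := Finset.card_le_three
    rwa [hSu, Finset.card_univ] at this
  · obtain ⟨u, hu⟩ : ∃ u, u ∉ S := by simpa [Finset.eq_univ_iff_forall] using hSu
    have hS3 : S.card = 3 :=
      Finset.card_eq_three.mpr
        ⟨x, y, op x y, hxy, (h.op_ne_left hxy).symm, (h.op_ne_right hxy).symm, rfl⟩
    have := h.two_mul_card_add_one_le hS hu
    omega

section OrderSix

variable [Fintype α] {p y : α}

theorem op_op_ne_self (h : IsMendelsohnOp op) (hα : Fintype.card α = 6) (hy : y ≠ p) :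
    op p (op p y) ≠ y := fun e => by
  have := h.card_le_three_or_seven_le hy.symm e
  omega

/-- Otherwise this set would be `op p`-invariant, and its complement, of one or two points, would
carry a fixed point or a 2-cycle: this rules out the cycle types `3 + 2` and `4 + 1`. -/
theorem iterate_four_notMem [DecidableEq α] (h : IsMendelsohnOp op) (hα : Fintype.card α = 6)
    (hy : y ≠ p) :
    (op p)^[4] y ∉ ({p, y, op p y, (op p)^[2] y, (op p)^[3] y} : Finset α) := by
  simp only [Function.iterate_succ_apply', Function.iterate_zero_apply]
  intro h4
  set A : Finset α := {p, y, op p y, op p (op p y), op p (op p (op p y))}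
  have hinj := h.injective_left p
  have hmaps : Set.MapsTo (op p) A A := by
    intro a ha
    simp only [A, Finset.coe_insert, Finset.coe_singleton, Set.mem_insert_iff,
      Set.mem_singleton_iff] at ha
    rcases ha with rfl | rfl | rfl | rfl | rfl
    exacts [by simp [A, h.idem], by simp [A], by simp [A], by simp [A], h4]
  have hcompl : Set.MapsTo (op p) (↑A)ᶜ (↑A)ᶜ :=
    ((A.finite_toSet.injOn_iff_bijOn_of_mapsTo hmaps).mp hinj.injOn).surjOn.mapsTo_compl hinj
  obtain ⟨z, -, hz⟩ := Finset.exists_mem_notMem_of_card_lt_card (s := A) (t := Finset.univ)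
    (by rw [Finset.card_univ, hα]; exact Finset.card_le_five.trans_lt (by norm_num))
  have hz₁ : op p z ∉ A := hcompl hz
  have hz₂ : op p (op p z) ∉ A := hcompl hz₁
  have hzp : z ≠ p := by rintro rfl; simp [A] at hz
  have hnodup : [p, y, op p y, op p (op p y), z, op p z, op p (op p z)].Nodup := by
    simp only [A, Finset.mem_insert, Finset.mem_singleton, not_or] at hz hz₁ hz₂
    have h₀ := h.op_ne_left hy.symm
    have h₀' := h.op_ne_left h₀.symm
    have h₁ := h.op_ne_right hy.symm
    have h₂ := h.op_op_ne_self hα hy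
    have h₃ := h.op_ne_right hzp.symm
    have h₄ := h.op_op_ne_self hα hzp
    simp only [List.nodup_cons, List.mem_cons, List.not_mem_nil, or_false, not_or, List.nodup_nil,
      hinj.eq_iff]
    grind
  simpa [hα] using hnodup.length_le_card

theorem iterate_ne_self (h : IsMendelsohnOp op) (hα : Fintype.card α = 6) (hy : y ≠ p)
    {k : ℕ} (hk₀ : 0 < k) (hk₅ : k < 5) : (op p)^[k] y ≠ y := by
  classical
  have h₄ := h.iterate_four_notMem hα hy
  intro e
  interval_cases k
  · exact h.op_ne_right hy.symm e
  · exact h.op_op_ne_self hα hy e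
  · apply h₄
    rw [show (op p)^[4] y = op p ((op p)^[3] y) from Function.iterate_succ_apply' _ _ _, e]
    simp
  · apply h₄
    simp [e]

theorem eq_of_iterate_eq (h : IsMendelsohnOp op) (hα : Fintype.card α = 6) (hy : y ≠ p)
    {i j : ℕ} (hi : i < 5) (hj : j < 5) (e : (op p)^[i] y = (op p)^[j] y) : i = j := by
  wlog hij : i < j generalizing i j
  · exact (Nat.eq_or_lt_of_le (not_lt.mp hij)).elim Eq.symm
      fun hji => (this hj hi e.symm hji).symm
  have := h.iterate_ne_self hα (h.iterate_ne_of_ne hy i) (k := j - i) (by omega) (by omega)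
  rw [← Function.iterate_add_apply, Nat.sub_add_cancel hij.le] at this
  exact absurd e.symm this

theorem eq_or_exists_eq_iterate (h : IsMendelsohnOp op) (hα : Fintype.card α = 6) (hy : y ≠ p)
    (x : α) : x = p ∨ ∃ k < 5, x = (op p)^[k] y := by
  classical
  set l := p :: (List.range 5).map fun k => (op p)^[k] y
  have hl : l.Nodup := by
    refine List.nodup_cons.mpr ⟨?_, List.nodup_range.map_on ?_⟩
    · simp only [List.mem_map, not_exists, not_and]
      exact fun k _ => h.iterate_ne_of_ne hy k
    · intro i hi j hj e
      exact h.eq_of_iterate_eq hα hy (List.mem_range.mp hi) (List.mem_range.mp hj) e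
  have hx : x ∈ l.toFinset := by
    rw [Finset.eq_univ_of_card l.toFinset (by rw [List.toFinset_card_of_nodup hl, hα]; simp [l])]
    exact Finset.mem_univ x
  rw [List.mem_toFinset, List.mem_cons, List.mem_map] at hx
  rcases hx with hx | ⟨k, hk, hx⟩
  · exact .inl hx
  · exact .inr ⟨k, List.mem_range.mp hk, hx.symm⟩

theorem op_iterate_one_iterate_three (h : IsMendelsohnOp op) (hα : Fintype.card α = 6)
    (hy : y ≠ p) : op ((op p)^[1] y) ((op p)^[3] y) = (op p)^[2] y := by
  have hne (i j : ℕ) (hij : i ≠ j := by norm_num) (hi : i < 5 := by norm_num)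
      (hj : j < 5 := by norm_num) : (op p)^[i] y ≠ (op p)^[j] y :=
    fun e => hij (h.eq_of_iterate_eq hα hy hi hj e)
  have rot := h.rotate ((op p)^[1] y) ((op p)^[3] y)
  have sym := h.semisymm ((op p)^[1] y) ((op p)^[3] y)
  rcases h.eq_or_exists_eq_iterate hα hy (op ((op p)^[1] y) ((op p)^[3] y)) with hx | ⟨k, hk, hx⟩
  · rw [hx] at rot
    exact absurd rot (hne 2 3)
  · interval_cases k
    · rw [hx] at rot
      exact absurd (rot.symm.trans (h.semisymm p y)) (h.iterate_ne_of_ne hy 3)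
    · exact absurd hx (h.op_ne_left (hne 1 3))
    · exact hx
    · exact absurd hx (h.op_ne_right (hne 1 3))
    · rw [hx] at sym
      exact absurd (sym.symm.trans (h.semisymm p _)) (h.iterate_ne_of_ne hy 1)

end OrderSix

theorem card_ne_six (h : IsMendelsohnOp op) [Fintype α] : Fintype.card α ≠ 6 := by
  intro hα
  obtain ⟨y, p, hy⟩ := Fintype.exists_pair_of_one_lt_card (by omega : 1 < Fintype.card α)
  have hforced := h.op_iterate_one_iterate_three hα hy
  have hforced' := h.op_iterate_one_iterate_three hα (h.iterate_ne_of_ne hy 1)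
  have hrot := h.rotate ((op p)^[1] y) ((op p)^[3] y)
  rw [hforced] at hrot
  have := h.eq_of_iterate_eq hα hy (i := 1) (j := 4) (by norm_num) (by norm_num)
    (h.injective_left _ (hrot.trans hforced'.symm))
  exact absurd this (by norm_num)

end IsMendelsohnOp

section MendelsohnTripleSystem

variable {v : ℕ} {T : Multiset (Fin v × Fin v × Fin v)} {x y z z' : Fin v}

def ContainsCyclic (T : Multiset (Fin v × Fin v × Fin v)) (x y z : Fin v) : Prop :=
  (x, y, z) ∈ T ∨ (y, z, x) ∈ T ∨ (z, x, y) ∈ T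

theorem ContainsCyclic.rotate (h : ContainsCyclic T x y z) : ContainsCyclic T y z x :=
  Or.rotate h

namespace IsMTS

theorem ne_of_containsCyclic (hT : IsMTS T) (h : ContainsCyclic T x y z) :
    x ≠ y ∧ y ≠ z ∧ z ≠ x := by
  rcases h with h | h | h <;> have := hT.1 _ h <;> simp only at this <;> tauto

theorem exists_containsCyclic (hT : IsMTS T) (hxy : x ≠ y) : ∃ z, ContainsCyclic T x y z := by
  obtain ⟨t, ht, hxyt⟩ := Multiset.mem_bind.mp
    (Multiset.count_pos.mp ((hT.2 x y hxy).symm ▸ Nat.one_pos))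
  simp only [mtsPairs, Multiset.insert_eq_cons, Multiset.mem_cons, Multiset.mem_singleton,
    Prod.ext_iff] at hxyt
  obtain ⟨a, b, c⟩ := t
  rcases hxyt with ⟨rfl, rfl⟩ | ⟨rfl, rfl⟩ | ⟨rfl, rfl⟩
  · exact ⟨c, .inl ht⟩
  · exact ⟨a, .inr (.inr ht)⟩
  · exact ⟨b, .inr (.inl ht)⟩

theorem eq_of_containsCyclic (hT : IsMTS T) (h : ContainsCyclic T x y z)
    (h' : ContainsCyclic T x y z') : z = z' := by
  classical
  obtain ⟨hxy, hyz, hzx⟩ := hT.ne_of_containsCyclic h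
  by_contra hne
  have hunique : ∀ t ∈ T, ∀ t' ∈ T, (x, y) ∈ mtsPairs t → (x, y) ∈ mtsPairs t' → t = t' := by
    intro t ht t' ht' hxyt hxyt'
    by_contra htt
    have := Multiset.two_le_count_bind ht ht' htt hxyt hxyt'
    rw [hT.2 x y hxy] at this
    omega
  rcases h with h | h | h <;> rcases h' with h' | h' | h' <;>
    have := hunique _ h _ h' (by simp [mtsPairs]) (by simp [mtsPairs]) <;>
    simp only [Prod.ext_iff] at this <;> tauto

theorem exists_isMendelsohnOp (hT : IsMTS T) :
    ∃ op : Fin v → Fin v → Fin v, IsMendelsohnOp op := by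
  classical
  let op : Fin v → Fin v → Fin v := fun x y =>
    if hxy : x = y then x else (hT.exists_containsCyclic hxy).choose
  have hop {x y : Fin v} (hxy : x ≠ y) : ContainsCyclic T x y (op x y) := by
    simpa only [op, dif_neg hxy] using (hT.exists_containsCyclic hxy).choose_spec
  refine ⟨op, fun x => dif_pos rfl, fun x y => ?_⟩
  by_cases hxy : x = y
  · subst hxy
    simp [op]
  · have h := hop hxy
    exact hT.eq_of_containsCyclic (hop (hT.ne_of_containsCyclic h).2.1) h.rotate

end IsMTS

end MendelsohnTripleSystem

theorem no_mts_six : ¬ ∃ T : Multiset (Fin 6 × Fin 6 × Fin 6), IsMTS T := by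
  rintro ⟨T, hT⟩
  obtain ⟨op, hop⟩ := hT.exists_isMendelsohnOp
  exact hop.card_ne_six (Fintype.card_fin 6)
end

section
/- A Mendelsohn triple system of order v exists if and only if v ≡ 0 or 1 (mod 3) and v ≠ 6. -/
/-!
Counting ordered pairs gives `3 |T| = v (v - 1)`, so `v ≢ 2 (mod 3)`; for `v = 6` an exhaustive
exact-cover search, checked by the kernel, finds nothing.

Conversely, write `v = 3u` or `v = 3u + 1`. If `u ≠ 2` there is an idempotent quasigroup `∘` of
order `u`: midpoints `(x + y) / 2` in `ZMod u` for odd `u`, and a one-point extension of the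
midpoint quasigroup of `ZMod (u - 1)` for even `u`. On the points `(x, i)` with `i : Fin 3`
(plus one point `∞` when `v = 3u + 1`) take an MTS(3) (resp. an MTS(4) through `∞`) on each column
`{x} × Fin 3`, and the triples `((a, i), (b, i), (a ∘ b, i + 1))` for `a ≠ b`. Each pair of points
in different columns then lies in exactly one of these triples, because `∘` is a quasigroup and
`a ∘ a = a`. The remaining order `7` is the cyclic system with base blocks `(0, 1, 3)`, `(0, 3, 1)`.
-/

open Finset Function

section Mendelsohn

variable {α β : Type*}

def cyclePairs (t : α × α × α) : Multiset (α × α) :=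
  {(t.1, t.2.1), (t.2.1, t.2.2), (t.2.2, t.1)}

def IsMendelsohn [DecidableEq α] (T : Multiset (α × α × α)) : Prop :=
  (∀ t ∈ T, t.1 ≠ t.2.1 ∧ t.2.1 ≠ t.2.2 ∧ t.2.2 ≠ t.1) ∧
  ∀ x y : α, x ≠ y → (T.bind cyclePairs).count (x, y) = 1

def HasMendelsohn (α : Type*) [DecidableEq α] : Prop :=
  ∃ T : Multiset (α × α × α), IsMendelsohn T

def tripleMap (g : α → β) : α × α × α → β × β × β :=
  Prod.map g (Prod.map g g)

theorem cyclePairs_tripleMap (g : α → β) (t : α × α × α) :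
    cyclePairs (tripleMap g t) = (cyclePairs t).map (Prod.map g g) := by
  simp [cyclePairs, tripleMap, Prod.map]

theorem mem_bind_cyclePairs_map {T : Multiset (α × α × α)} {x y : α} (g : α → β)
    (h : (x, y) ∈ T.bind cyclePairs) : (g x, g y) ∈ (T.map (tripleMap g)).bind cyclePairs := by
  rw [Multiset.bind_map]
  obtain ⟨t, ht, hxy⟩ := Multiset.mem_bind.1 h
  exact Multiset.mem_bind.2 ⟨t, ht, by
    rw [cyclePairs_tripleMap]; exact Multiset.mem_map_of_mem (Prod.map g g) hxy⟩

theorem mem_bind_cyclePairs_add_left {S T : Multiset (α × α × α)} {x y : α}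
    (h : (x, y) ∈ S.bind cyclePairs) : (x, y) ∈ (S + T).bind cyclePairs := by
  rw [Multiset.add_bind]; exact Multiset.mem_add.2 (Or.inl h)

theorem mem_bind_cyclePairs_add_right {S T : Multiset (α × α × α)} {x y : α}
    (h : (x, y) ∈ T.bind cyclePairs) : (x, y) ∈ (S + T).bind cyclePairs := by
  rw [Multiset.add_bind]; exact Multiset.mem_add.2 (Or.inr h)

theorem card_bind_cyclePairs (T : Multiset (α × α × α)) :
    Multiset.card (T.bind cyclePairs) = 3 * Multiset.card T := by
  simp [Multiset.card_bind, cyclePairs, mul_comm]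

variable [Fintype α]

theorem card_offDiag_add_card :
    #(univ : Finset α).offDiag + Fintype.card α = Fintype.card α * Fintype.card α := by
  rw [offDiag_card, card_univ]
  have := Nat.le_mul_self (Fintype.card α)
  omega

variable [DecidableEq α] [DecidableEq β]

theorem isMendelsohn_iff {T : Multiset (α × α × α)} :
    IsMendelsohn T ↔ T.bind cyclePairs = (univ : Finset α).offDiag.val := by
  constructor
  · rintro ⟨hdist, hcount⟩
    ext ⟨x, y⟩
    by_cases hxy : x = y
    · subst hxy
      have hdiag : (x, x) ∉ T.bind cyclePairs := by
        simp only [Multiset.mem_bind, cyclePairs, Multiset.insert_eq_cons, Multiset.mem_cons,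
          Multiset.mem_singleton, Prod.mk.injEq, not_exists, not_and]
        intro t ht
        obtain ⟨h1, h2, h3⟩ := hdist t ht
        grind
      rw [Multiset.count_eq_zero_of_notMem hdiag, Multiset.count_eq_zero_of_notMem (by simp)]
    · rw [hcount x y hxy, Multiset.count_eq_one_of_mem (univ.offDiag).nodup (by simp [hxy])]
  · intro h
    refine ⟨fun t ht => ?_, fun x y hxy => ?_⟩
    · have hsub : ∀ p ∈ cyclePairs t, p ∈ (univ : Finset α).offDiag.val := fun p hp =>
        h ▸ Multiset.mem_bind.2 ⟨t, ht, hp⟩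
      simpa [cyclePairs] using hsub
    · rw [h, Multiset.count_eq_one_of_mem (univ.offDiag).nodup (by simp [hxy])]

theorem IsMendelsohn.card_add {T : Multiset (α × α × α)} (h : IsMendelsohn T) :
    3 * Multiset.card T + Fintype.card α = Fintype.card α * Fintype.card α := by
  have hcard := congrArg Multiset.card (isMendelsohn_iff.1 h)
  rw [card_bind_cyclePairs, card_val] at hcard
  rw [hcard, card_offDiag_add_card]

theorem isMendelsohn_of_forall_mem {T : Multiset (α × α × α)}
    (hcover : ∀ x y : α, x ≠ y → (x, y) ∈ T.bind cyclePairs)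
    (hcard : 3 * Multiset.card T + Fintype.card α = Fintype.card α * Fintype.card α) :
    IsMendelsohn T := by
  refine isMendelsohn_iff.2 (Multiset.eq_of_le_of_card_le ?_ ?_).symm
  · rw [Multiset.le_iff_subset (univ.offDiag).nodup]
    intro p hp
    exact hcover p.1 p.2 (mem_offDiag.1 hp).2.2
  · have := card_offDiag_add_card (α := α)
    rw [card_bind_cyclePairs, card_val]
    omega

theorem HasMendelsohn.card_mod_three (h : HasMendelsohn α) :
    Fintype.card α % 3 = 0 ∨ Fintype.card α % 3 = 1 := by
  obtain ⟨T, hT⟩ := h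
  have hcard := hT.card_add
  have hsq := Nat.mul_mod (Fintype.card α) (Fintype.card α) 3
  have : Fintype.card α % 3 < 3 := Nat.mod_lt _ (by norm_num)
  interval_cases hr : Fintype.card α % 3 <;> omega

theorem HasMendelsohn.of_equiv [Fintype β] (h : HasMendelsohn α) (e : α ≃ β) :
    HasMendelsohn β := by
  obtain ⟨T, hT⟩ := h
  refine ⟨T.map (tripleMap e), isMendelsohn_of_forall_mem (fun x y hxy => ?_) ?_⟩
  · have hmem : (e.symm x, e.symm y) ∈ T.bind cyclePairs := by
      rw [isMendelsohn_iff.1 hT]; simpa using hxy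
    simpa using mem_bind_cyclePairs_map e hmem
  · rw [Multiset.card_map, ← Fintype.card_congr e]
    exact hT.card_add

end Mendelsohn

section Quasigroup

variable {α β R : Type*}

structure IsIdempotentQuasigroup (f : α → α → α) : Prop where
  idem : ∀ x, f x x = x
  bijective_left : ∀ a, Bijective (f a)
  bijective_right : ∀ b, Bijective (f · b)

theorem IsIdempotentQuasigroup.map_equiv {f : α → α → α} (hf : IsIdempotentQuasigroup f)
    (e : α ≃ β) : IsIdempotentQuasigroup fun a b => e (f (e.symm a) (e.symm b)) where
  idem x := by simp [hf.idem]
  bijective_left a := e.bijective.comp ((hf.bijective_left _).comp e.symm.bijective)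
  bijective_right b := e.bijective.comp ((hf.bijective_right _).comp e.symm.bijective)

theorem isIdempotentQuasigroup_of_isEmpty [IsEmpty α] (f : α → α → α) :
    IsIdempotentQuasigroup f where
  idem := isEmptyElim
  bijective_left := isEmptyElim
  bijective_right := isEmptyElim

variable [CommRing R] {k : R}

theorem isIdempotentQuasigroup_midpoint (hk : 2 * k = 1) :
    IsIdempotentQuasigroup fun x y : R => k * (x + y) where
  idem x := by linear_combination x * hk
  bijective_left a := by
    refine ⟨fun y y' h => ?_, fun b => ⟨2 * b - a, by linear_combination b * hk⟩⟩
    linear_combination 2 * h + (y' - y) * hk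
  bijective_right b := by
    refine ⟨fun x x' h => ?_, fun c => ⟨2 * c - b, by linear_combination c * hk⟩⟩
    linear_combination 2 * h + (x' - x) * hk

-- The value `x + k = k * (x + (x + 1))` displaced by `x * (x + 1) = ∞` reappears as `x * ∞`,
-- and likewise `y - k` as `∞ * y`, so rows and columns stay bijective.
def extendMidpoint [DecidableEq R] (k : R) : Option R → Option R → Option R
  | some x, some y => if y = x + 1 then none else some (k * (x + y))
  | some x, none => some (x + k)
  | none, some y => some (y - k)
  | none, none => none

theorem isIdempotentQuasigroup_extendMidpoint [DecidableEq R] [Finite R] (hk : 2 * k = 1)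
    (h10 : (1 : R) ≠ 0) : IsIdempotentQuasigroup (extendMidpoint k) where
  idem
    | none => rfl
    | some x => by
      simp only [extendMidpoint, if_neg (by simpa using h10 : ¬x = x + 1)]
      congr 1; linear_combination x * hk
  bijective_left a := by
    refine Finite.surjective_iff_bijective.1 fun b => ?_
    match a, b with
    | none, none => exact ⟨none, rfl⟩
    | none, some b => exact ⟨some (b + k), by simp [extendMidpoint]⟩
    | some a, none => exact ⟨some (a + 1), by simp [extendMidpoint]⟩
    | some a, some b =>
      by_cases hb : b = a + k
      · exact ⟨none, by simp [extendMidpoint, hb]⟩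
      · refine ⟨some (2 * b - a), ?_⟩
        have hne : 2 * b - a ≠ a + 1 := fun h => hb (by linear_combination k * h + (a - b) * hk)
        simp only [extendMidpoint, if_neg hne]
        congr 1; linear_combination b * hk
  bijective_right b := by
    refine Finite.surjective_iff_bijective.1 fun c => ?_
    match b, c with
    | none, none => exact ⟨none, rfl⟩
    | none, some c => exact ⟨some (c - k), by simp [extendMidpoint]⟩
    | some b, none => exact ⟨some (b - 1), by simp [extendMidpoint]⟩
    | some b, some c =>
      by_cases hc : c = b - k
      · exact ⟨none, by simp [extendMidpoint, hc]⟩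
      · refine ⟨some (2 * c - b), ?_⟩
        have hne : b ≠ 2 * c - b + 1 := fun h => hc (by linear_combination -k * h + (b - c) * hk)
        simp only [extendMidpoint, if_neg hne]
        congr 1; linear_combination c * hk

theorem ZMod.exists_two_mul_eq_one {n : ℕ} (hn : Odd n) : ∃ k : ZMod n, 2 * k = 1 := by
  obtain ⟨m, rfl⟩ := hn
  refine ⟨m + 1, ?_⟩
  have h0 := ZMod.natCast_self (2 * m + 1)
  push_cast at h0
  linear_combination h0

theorem exists_isIdempotentQuasigroup_fin {n : ℕ} (hn : n ≠ 2) :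
    ∃ f : Fin n → Fin n → Fin n, IsIdempotentQuasigroup f := by
  obtain rfl | hn0 := eq_or_ne n 0
  · exact ⟨_, isIdempotentQuasigroup_of_isEmpty fun x => x.elim0⟩
  rcases Nat.even_or_odd n with ⟨m, rfl⟩ | hodd
  · have hodd : Odd (2 * m - 1) := ⟨m - 1, by omega⟩
    have : NeZero (2 * m - 1) := ⟨by omega⟩
    have : Fact (1 < 2 * m - 1) := ⟨by omega⟩
    obtain ⟨k, hk⟩ := ZMod.exists_two_mul_eq_one hodd
    have hcard : Fintype.card (Option (ZMod (2 * m - 1))) = Fintype.card (Fin (m + m)) := by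
      simp; omega
    exact ⟨_, (isIdempotentQuasigroup_extendMidpoint hk one_ne_zero).map_equiv
      (Fintype.equivOfCardEq hcard)⟩
  · have : NeZero n := ⟨hn0⟩
    obtain ⟨k, hk⟩ := ZMod.exists_two_mul_eq_one hodd
    exact ⟨_, (isIdempotentQuasigroup_midpoint hk).map_equiv (ZMod.finEquiv n).symm⟩

end Quasigroup

section SmallSystems

def mts3 : Multiset (Fin 3 × Fin 3 × Fin 3) := {(0, 1, 2), (0, 2, 1)}

theorem isMendelsohn_mts3 : IsMendelsohn mts3 := by
  unfold IsMendelsohn mts3 cyclePairs; decide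

def mts4 : Multiset (Option (Fin 3) × Option (Fin 3) × Option (Fin 3)) :=
  {(some 0, some 1, some 2), (some 1, some 0, none), (some 2, none, some 0),
    (none, some 2, some 1)}

theorem isMendelsohn_mts4 : IsMendelsohn mts4 := by
  unfold IsMendelsohn mts4 cyclePairs; decide

def mts7 : Multiset (Fin 7 × Fin 7 × Fin 7) :=
  (univ : Finset (Fin 7)).val.bind fun i => {(i, i + 1, i + 3), (i, i + 3, i + 1)}

set_option maxRecDepth 10000 in
theorem isMendelsohn_mts7 : IsMendelsohn mts7 := by
  unfold IsMendelsohn mts7 cyclePairs; decide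

end SmallSystems

section Construction

variable {α γ P : Type*} [Fintype α]

def columnTriples (S : Multiset (γ × γ × γ)) (g : α → γ → P) : Multiset (P × P × P) :=
  (univ : Finset α).val.bind fun x => S.map (tripleMap (g x))

theorem card_columnTriples (S : Multiset (γ × γ × γ)) (g : α → γ → P) :
    Multiset.card (columnTriples S g) = Fintype.card α * Multiset.card S := by
  simp [columnTriples, Multiset.card_bind]

theorem mem_bind_columnTriples [DecidableEq γ] [Fintype γ] {S : Multiset (γ × γ × γ)}
    (hS : IsMendelsohn S) (g : α → γ → P) (x : α) {c d : γ} (hcd : c ≠ d) :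
    (g x c, g x d) ∈ (columnTriples S g).bind cyclePairs := by
  have hmem : (c, d) ∈ S.bind cyclePairs := by
    rw [isMendelsohn_iff.1 hS]; simpa using hcd
  obtain ⟨t, ht, hp⟩ := Multiset.mem_bind.1 (mem_bind_cyclePairs_map (g x) hmem)
  exact Multiset.mem_bind.2 ⟨t, Multiset.mem_bind.2 ⟨x, mem_univ_val x, ht⟩, hp⟩

def crossTriples (f : α → α → α) : Multiset ((α × Fin 3) × (α × Fin 3) × (α × Fin 3)) :=
  ((univ : Finset α).offDiag ×ˢ (univ : Finset (Fin 3))).val.map fun q =>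
    ((q.1.1, q.2), (q.1.2, q.2), (f q.1.1 q.1.2, q.2 + 1))

theorem card_crossTriples (f : α → α → α) :
    Multiset.card (crossTriples f) = 3 * #(univ : Finset α).offDiag := by
  simp [crossTriples, mul_comm]

theorem mem_bind_crossTriples {f : α → α → α} (hf : IsIdempotentQuasigroup f) {a b : α}
    (hab : a ≠ b) (i j : Fin 3) : ((a, i), (b, j)) ∈ (crossTriples f).bind cyclePairs := by
  have hmem : ∀ {a b : α}, a ≠ b → ∀ i : Fin 3,
      ((a, i), (b, i), (f a b, i + 1)) ∈ crossTriples f := fun h i =>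
    Multiset.mem_map.2 ⟨((_, _), i), by simpa using h, rfl⟩
  have htri : ∀ i j : Fin 3, j = i ∨ j = i + 1 ∨ i = j + 1 := by decide
  obtain rfl | rfl | rfl := htri i j
  · exact Multiset.mem_bind.2 ⟨_, hmem hab j, by simp [cyclePairs]⟩
  · obtain ⟨z, hz : f z a = b⟩ := (hf.bijective_right a).2 b
    have hza : z ≠ a := fun h => hab (by rw [← hz, h, hf.idem])
    refine Multiset.mem_bind.2 ⟨_, hmem hza i, ?_⟩
    simp [cyclePairs, hz]
  · obtain ⟨w, hw⟩ := (hf.bijective_left b).2 a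
    have hbw : b ≠ w := fun h => hab (by rw [← hw, ← h, hf.idem])
    refine Multiset.mem_bind.2 ⟨_, hmem hbw j, ?_⟩
    simp [cyclePairs, hw]

variable [DecidableEq α] {f : α → α → α}

theorem IsIdempotentQuasigroup.hasMendelsohn_prod_fin_three (hf : IsIdempotentQuasigroup f) :
    HasMendelsohn (α × Fin 3) := by
  refine ⟨columnTriples mts3 (fun x i => (x, i)) + crossTriples f,
    isMendelsohn_of_forall_mem ?_ ?_⟩
  · rintro ⟨a, i⟩ ⟨b, j⟩ hne
    by_cases hab : a = b
    · subst hab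
      exact mem_bind_cyclePairs_add_left
        (mem_bind_columnTriples isMendelsohn_mts3 _ a fun h => hne (h ▸ rfl))
    · exact mem_bind_cyclePairs_add_right (mem_bind_crossTriples hf hab i j)
  · have := card_offDiag_add_card (α := α)
    simp only [Multiset.card_add, card_columnTriples, card_crossTriples, Fintype.card_prod,
      Fintype.card_fin, mts3, Multiset.insert_eq_cons, Multiset.card_cons,
      Multiset.card_singleton]
    linarith

theorem IsIdempotentQuasigroup.hasMendelsohn_option_prod_fin_three
    (hf : IsIdempotentQuasigroup f) : HasMendelsohn (Option (α × Fin 3)) := by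
  refine ⟨columnTriples mts4 (fun x => Option.map (x, ·)) + (crossTriples f).map (tripleMap some),
    isMendelsohn_of_forall_mem ?_ ?_⟩
  · have hcol := mem_bind_columnTriples isMendelsohn_mts4 fun (x : α) => Option.map (x, ·)
    rintro (_ | ⟨a, i⟩) (_ | ⟨b, j⟩) hne
    · exact absurd rfl hne
    · exact mem_bind_cyclePairs_add_left (hcol b (c := none) (d := some j) (by simp))
    · exact mem_bind_cyclePairs_add_left (hcol a (c := some i) (d := none) (by simp))
    · by_cases hab : a = b
      · subst hab
        exact mem_bind_cyclePairs_add_left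
          (hcol a (c := some i) (d := some j) fun h => hne (by simp_all))
      · exact mem_bind_cyclePairs_add_right
          (mem_bind_cyclePairs_map some (mem_bind_crossTriples hf hab i j))
  · have := card_offDiag_add_card (α := α)
    simp only [Multiset.card_add, Multiset.card_map, card_columnTriples, card_crossTriples,
      Fintype.card_option, Fintype.card_prod, Fintype.card_fin, mts4, Multiset.insert_eq_cons,
      Multiset.card_cons, Multiset.card_singleton]
    linarith

end Construction

theorem hasMendelsohn_fin {v : ℕ} (hmod : v % 3 = 0 ∨ v % 3 = 1) (h6 : v ≠ 6) :
    HasMendelsohn (Fin v) := by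
  obtain ⟨u, r, hr, rfl⟩ : ∃ u r, r ≤ 1 ∧ v = 3 * u + r := ⟨v / 3, v % 3, by omega, by omega⟩
  by_cases hu : u = 2
  · obtain rfl : r = 1 := by omega
    subst hu
    exact ⟨mts7, isMendelsohn_mts7⟩
  obtain ⟨f, hf⟩ := exists_isIdempotentQuasigroup_fin hu
  interval_cases r
  · exact hf.hasMendelsohn_prod_fin_three.of_equiv (Fintype.equivOfCardEq (by simp [mul_comm]))
  · exact hf.hasMendelsohn_option_prod_fin_three.of_equiv
      (Fintype.equivOfCardEq (by simp [mul_comm]))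

section OrderSix

theorem exists_cyclePairs_eq {α : Type*} {t : α × α × α} {p : α × α}
    (h : p ∈ cyclePairs t) : ∃ c, cyclePairs t = {p, (p.2, c), (c, p.1)} := by
  simp only [cyclePairs, Multiset.insert_eq_cons, Multiset.mem_cons,
    Multiset.mem_singleton] at h
  simp only [cyclePairs, Multiset.insert_eq_cons, ← Multiset.cons_zero]
  rcases h with rfl | rfl | rfl
  · exact ⟨t.2.2, rfl⟩
  · exact ⟨t.1, by rw [Multiset.cons_swap, Multiset.cons_swap (t.1, t.2.1)]⟩
  · exact ⟨t.2.1, by rw [Multiset.cons_swap (t.2.1, t.2.2), Multiset.cons_swap]⟩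

-- Exhaustive: the triple covering the first pair `(a, b)` of `l` must be `(a, b, c)` for some `c`.
def coverSearch {v : ℕ} : ℕ → List (Fin v × Fin v) → Bool
  | _, [] => true
  | 0, _ :: _ => false
  | fuel + 1, (a, b) :: ps =>
    (List.finRange v).any fun c =>
      (b, c) ∈ ps && (c, a) ∈ ps.erase (b, c) &&
        coverSearch fuel ((ps.erase (b, c)).erase (c, a))

theorem coverSearch_eq_true {v : ℕ} (fuel : ℕ) {l : List (Fin v × Fin v)}
    {S : Multiset (Fin v × Fin v × Fin v)} (hl : l.length ≤ fuel)
    (hS : S.bind cyclePairs = l) : coverSearch fuel l = true := by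
  induction fuel generalizing l S with
  | zero => obtain rfl : l = [] := List.eq_nil_of_length_eq_zero (by omega); rfl
  | succ fuel ih =>
    obtain _ | ⟨⟨a, b⟩, ps⟩ := l
    · rfl
    obtain ⟨t, ht, hab⟩ := Multiset.mem_bind.1 (hS ▸ List.mem_cons_self :
      (a, b) ∈ S.bind cyclePairs)
    obtain ⟨c, hc⟩ := exists_cyclePairs_eq hab
    set rest := (S.erase t).bind cyclePairs
    have hps : (b, c) ::ₘ (c, a) ::ₘ rest = ps := by
      rw [← Multiset.cons_inj_right (a, b), Multiset.cons_coe, ← hS, ← Multiset.cons_erase ht,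
        Multiset.cons_bind, hc]
      simp [rest]
    have hbc : (b, c) ∈ ps := by simp [← Multiset.mem_coe, ← hps]
    have hps' : (c, a) ::ₘ rest = ps.erase (b, c) := by
      rw [← Multiset.cons_inj_right (b, c), hps, Multiset.cons_coe]
      exact Multiset.coe_eq_coe.2 (List.perm_cons_erase hbc)
    have hca : (c, a) ∈ ps.erase (b, c) := by simp [← Multiset.mem_coe, ← hps']
    have hrest : rest = (ps.erase (b, c)).erase (c, a) := by
      rw [← Multiset.cons_inj_right (c, a), hps', Multiset.cons_coe]
      exact Multiset.coe_eq_coe.2 (List.perm_cons_erase hca)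
    have hlen : ((ps.erase (b, c)).erase (c, a)).length ≤ fuel := by
      simp only [List.length_cons] at hl
      grind [List.length_erase_le]
    simp only [coverSearch, List.any_eq_true, Bool.and_eq_true, decide_eq_true_eq]
    exact ⟨c, List.mem_finRange c, ⟨hbc, hca⟩, ih hlen hrest⟩

def offDiagList (v : ℕ) : List (Fin v × Fin v) :=
  (List.finRange v ×ˢ List.finRange v).filter fun p => p.1 ≠ p.2

theorem not_hasMendelsohn_fin_six : ¬HasMendelsohn (Fin 6) := by
  rintro ⟨T, hT⟩
  have hlist : (univ : Finset (Fin 6)).offDiag.val = offDiagList 6 := by decide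
  have hfail : coverSearch 30 (offDiagList 6) = false := by decide
  rw [coverSearch_eq_true 30 (by decide) ((isMendelsohn_iff.1 hT).trans hlist)] at hfail
  exact Bool.noConfusion hfail

end OrderSix

theorem mts_exists_iff (v : ℕ) :
    (∃ T : Multiset (Fin v × Fin v × Fin v), IsMTS T) ↔
      ((v % 3 = 0 ∨ v % 3 = 1) ∧ v ≠ 6) := by
  change HasMendelsohn (Fin v) ↔ _
  refine ⟨fun h => ⟨?_, ?_⟩, fun ⟨hmod, h6⟩ => hasMendelsohn_fin hmod h6⟩
  · simpa using h.card_mod_three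
  · rintro rfl
    exact not_hasMendelsohn_fin_six h
end

section
/- The permutation [0,1,3,2,4,5,6] is a 3-good sequencing of the Mendelsohn triple system of order 7 with triples {(0,1,2),(0,3,1),(0,2,4),(0,5,3),(0,4,6),(0,6,5),(1,5,2),(1,3,6),(1,4,5),(1,6,4),(2,3,4),(2,6,3),(2,5,6),(3,5,4)}. -/
set_option maxRecDepth 4000 in
theorem mts7_three_good_seq :
    IsGoodSeq 3 ({(0,1,2),(0,3,1),(0,2,4),(0,5,3),(0,4,6),(0,6,5),(1,5,2),(1,3,6),(1,4,5),(1,6,4),(2,3,4),(2,6,3),(2,5,6),(3,5,4)} : Multiset (Fin 7 × Fin 7 × Fin 7))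
      ([0,1,3,2,4,5,6] : List (Fin 7)) :=
  ⟨by decide, by decide⟩
end

section
/- The collection of cyclic triples {(0,1,2),(0,2,1),(0,3,4),(0,4,3),(0,5,6),(0,6,5),(1,3,5),(1,5,3),(1,4,6),(1,6,4),(2,3,6),(2,6,3),(2,4,5),(2,5,4)} on point set {0,1,...,6} is a Mendelsohn triple system of order 7, and [0,1,3,2,5,6,4] is a 3-good sequencing of it. -/
instance {v : ℕ} (T : Multiset (Fin v × Fin v × Fin v)) : Decidable (IsMTS T) :=
  inferInstanceAs (Decidable (_ ∧ _))

instance {v : ℕ} (ℓ : ℕ) (T : Multiset (Fin v × Fin v × Fin v)) (xs : List (Fin v)) :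
    Decidable (IsGoodSeq ℓ T xs) :=
  inferInstanceAs (Decidable (_ ∧ _))

theorem mts7_second_example :
    IsMTS ({(0,1,2),(0,2,1),(0,3,4),(0,4,3),(0,5,6),(0,6,5),(1,3,5),(1,5,3),(1,4,6),(1,6,4),(2,3,6),(2,6,3),(2,4,5),(2,5,4)} : Multiset (Fin 7 × Fin 7 × Fin 7)) ∧
    IsGoodSeq 3 ({(0,1,2),(0,2,1),(0,3,4),(0,4,3),(0,5,6),(0,6,5),(1,3,5),(1,5,3),(1,4,6),(1,6,4),(2,3,6),(2,6,3),(2,4,5),(2,5,4)} : Multiset (Fin 7 × Fin 7 × Fin 7))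
      ([0,1,3,2,5,6,4] : List (Fin 7)) := by
  decide +kernel
end

section
/- The directed graph on vertex set {0,1,2,3,4,5} whose arcs are all ordered pairs of distinct vertices cannot be decomposed into directed 3-cycles. -/
/-!
Send an arc `(x, y)` to the third vertex `f x y` of its triangle. The arc rotation
`(x, y) ↦ (y, f x y)` has order three, so it is an even permutation of the 36 pairs. It factors
as the swap `(x, y) ↦ (y, x)`, which is odd (15 transpositions), followed by the permutations
`x ↦ f x u` of the fibres. Hence one of these, a fixed-point-free permutation of the five
vertices other than `u`, is odd, so it is a 3-cycle times a 2-cycle, and the 2-cycle gives two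
triangles `(a, b, c)`, `(b, a, c)` on the same vertices. Then `x ↦ f x a` cycles the three
remaining vertices, so for any two of them `d, e` the vertex `a` lies on the triangle through
`(d, e)` or on the one through `(e, d)`. The same holds for `b` and `c`, but these two triangles
have only two third vertices.
-/

open Equiv Equiv.Perm Finset

theorem Equiv.Perm.exists_apply_apply_eq_of_card_support_eq_five_of_sign_eq_neg_one
    {α : Type*} [Fintype α] [DecidableEq α] {g : Perm α} (h5 : #g.support = 5)
    (hg : sign g = -1) :
    ∃ x, g x ≠ x ∧ g (g x) = x := by
  have hsum : g.cycleType.sum = 5 := by rw [sum_cycleType, h5]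
  have hcard : 2 * Multiset.card g.cycleType ≤ 5 := by
    rw [← hsum, mul_comm, ← smul_eq_mul]
    exact Multiset.card_nsmul_le_sum fun _ => two_le_of_mem_cycleType
  have hodd : Odd (5 + Multiset.card g.cycleType) := by
    rwa [sign_of_cycleType, hsum, neg_one_pow_eq_neg_one_iff_odd (by decide)] at hg
  have hne : Multiset.card g.cycleType ≠ 0 := by
    rw [Ne, Multiset.card_eq_zero]
    rintro h
    simp [h] at hsum
  obtain ⟨m, n, hmn⟩ : ∃ m n, g.cycleType = {m, n} :=
    Multiset.card_eq_two.1 (by grind)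
  have hm : 2 ≤ m := two_le_of_mem_cycleType (σ := g) (by simp [hmn])
  have hn : 2 ≤ n := two_le_of_mem_cycleType (σ := g) (by simp [hmn])
  have h2 : 2 ∈ g.cycleType := by
    simp only [hmn, Multiset.insert_eq_cons, Multiset.sum_cons, Multiset.sum_singleton] at hsum
    simp only [hmn, Multiset.insert_eq_cons, Multiset.mem_cons, Multiset.mem_singleton]
    omega
  obtain ⟨c, τ, rfl, hdisj, -, hc2⟩ := mem_cycleType_iff.1 h2
  obtain ⟨x, y, hxy, rfl⟩ := card_support_eq_two.1 hc2
  have hτx : τ x = x := (hdisj x).resolve_left (by simp [swap_apply_left, hxy.symm])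
  have hτy : τ y = y := (hdisj y).resolve_left (by simp [swap_apply_right, hxy])
  exact ⟨x, by simp [hτx, hxy.symm], by simp [hτx, hτy]⟩

theorem apply_eq_or_apply_eq_of_card_eq_three {α : Type*} [DecidableEq α] {s : Finset α}
    (hs : #s = 3) {g : α → α} (hinj : Set.InjOn g s) (hmaps : Set.MapsTo g s s)
    (hfix : ∀ x ∈ s, g x ≠ x) {d e : α} (hd : d ∈ s) (he : e ∈ s) (hde : d ≠ e) :
    g d = e ∨ g e = d := by
  by_contra! h
  have hrest : #(s \ {d, e}) = 1 := by
    rw [card_sdiff_of_subset (by simp [insert_subset_iff, hd, he]), hs, card_pair hde]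
  have hdd : g d ∈ s \ {d, e} := by simp [mem_coe.1 (hmaps hd), hfix d hd, h.1]
  have hee : g e ∈ s \ {d, e} := by simp [mem_coe.1 (hmaps he), hfix e he, h.2]
  exact hde (hinj hd he (card_le_one.1 hrest.le _ hdd _ hee))

/-- `f x y` is the third vertex `z` of a cyclic triangle `(x, y, z)` through the arc `(x, y)`;
the last condition says that the arc `(y, z)` lies on the same triangle. -/
def IsThirdVertexMap {α : Type*} (f : α → α → α) : Prop :=
  ∀ ⦃x y⦄, x ≠ y → f x y ≠ x ∧ f x y ≠ y ∧ f y (f x y) = x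

namespace IsThirdVertexMap

variable {α : Type*} {f : α → α → α} (hf : IsThirdVertexMap f) {x y : α}
include hf

theorem ne_left (hxy : x ≠ y) : f x y ≠ x := (hf hxy).1

theorem ne_right (hxy : x ≠ y) : f x y ≠ y := (hf hxy).2.1

theorem apply_apply (hxy : x ≠ y) : f y (f x y) = x := (hf hxy).2.2

theorem apply_eq_of_apply_eq {z : α} (hxy : x ≠ y) (h : f x y = z) : f y z = x :=
  h ▸ hf.apply_apply hxy

theorem apply_apply_left (hxy : x ≠ y) : f (f x y) x = y := by
  simpa only [hf.apply_apply hxy] using hf.apply_apply (hf.ne_right hxy).symm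

theorem apply_injOn_left (u : α) : Set.InjOn (f · u) {u}ᶜ := fun x hx y hy hxy => by
  simpa only [hf.apply_apply hx, hf.apply_apply hy] using congrArg (f u) hxy

variable [DecidableEq α]

def vertexPerm (u : α) : Perm α where
  toFun x := if x = u then u else f x u
  invFun y := if y = u then u else f u y
  left_inv x := by
    by_cases hx : x = u
    · simp [hx]
    · simp [hx, hf.ne_right hx, hf.apply_apply hx]
  right_inv y := by
    by_cases hy : y = u
    · simp [hy]
    · simp [hy, hf.ne_left (Ne.symm hy), hf.apply_apply_left (Ne.symm hy)]

theorem vertexPerm_apply_of_ne {u : α} (hx : x ≠ u) : hf.vertexPerm u x = f x u := if_neg hx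

theorem vertexPerm_apply_self (u : α) : hf.vertexPerm u u = u := if_pos rfl

theorem support_vertexPerm [Fintype α] (u : α) : (hf.vertexPerm u).support = univ.erase u := by
  ext x
  by_cases hx : x = u
  · simp [hx, vertexPerm_apply_self]
  · simp [hx, hf.vertexPerm_apply_of_ne hx, hf.ne_left hx]

def arcRotation : Perm (α × α) := prodCongrRight hf.vertexPerm * prodComm α α

theorem arcRotation_apply_of_ne (hxy : x ≠ y) : hf.arcRotation (x, y) = (y, f x y) := by
  simp [arcRotation, hf.vertexPerm_apply_of_ne hxy]

theorem arcRotation_pow_three : hf.arcRotation ^ 3 = 1 := by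
  ext ⟨x, y⟩ : 1
  by_cases hxy : x = y
  · subst hxy
    simp [pow_succ, arcRotation, vertexPerm_apply_self]
  · have hyz : y ≠ f x y := (hf.ne_right hxy).symm
    have hzx : f x y ≠ x := hf.ne_left hxy
    simp only [pow_succ, pow_zero, one_mul, Perm.mul_apply, hf.arcRotation_apply_of_ne hxy,
      hf.arcRotation_apply_of_ne hyz, hf.apply_apply hxy, hf.arcRotation_apply_of_ne hzx,
      hf.apply_apply_left hxy, Perm.one_apply]

theorem prod_sign_vertexPerm [Fintype α] :
    ∏ u, sign (hf.vertexPerm u) = sign (prodComm α α : Perm (α × α)) := by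
  have hrot : sign hf.arcRotation = 1 := by
    calc sign hf.arcRotation = sign hf.arcRotation ^ 3 := by
          rw [pow_succ, Int.units_sq, one_mul]
      _ = 1 := by rw [← map_pow, hf.arcRotation_pow_three, map_one]
  rwa [arcRotation, map_mul, sign_prodCongrRight, mul_eq_one_iff_eq_inv,
    Int.units_inv_eq_self] at hrot

variable [Fintype α] (hcard : Fintype.card α = 6)
include hcard

theorem exists_apply_eq_apply_swap {u : α} (hu : sign (hf.vertexPerm u) = -1) :
    ∃ x y, x ≠ y ∧ f x y = f y x := by
  have h5 : #(hf.vertexPerm u).support = 5 := by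
    rw [hf.support_vertexPerm, card_erase_of_mem (mem_univ u), card_univ, hcard]
  obtain ⟨x, hx, hxx⟩ := exists_apply_apply_eq_of_card_support_eq_five_of_sign_eq_neg_one h5 hu
  have hxu : x ≠ u := fun h => hx (h ▸ hf.vertexPerm_apply_self u)
  rw [hf.vertexPerm_apply_of_ne hxu, hf.vertexPerm_apply_of_ne (hf.ne_right hxu)] at hxx
  exact ⟨u, f x u, (hf.ne_right hxu).symm, by rw [hf.apply_apply hxu, hxx]⟩

theorem apply_eq_or_apply_swap_eq {a b d e : α} (hab : a ≠ b) (hba : f b a = f a b)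
    (hd : d ∈ ({a, b, f a b} : Finset α)ᶜ) (he : e ∈ ({a, b, f a b} : Finset α)ᶜ)
    (hde : d ≠ e) : f d e = a ∨ f e d = a := by
  set c := f a b
  have hS : #({a, b, c} : Finset α)ᶜ = 3 := by
    rw [card_compl, hcard, card_eq_three.2
      ⟨a, b, c, hab, (hf.ne_left hab).symm, (hf.ne_right hab).symm, rfl⟩]
  have hS_ne : ∀ x ∈ ({a, b, c} : Finset α)ᶜ, x ≠ a ∧ x ≠ b ∧ x ≠ c := by simp
  have hinj : Set.InjOn (f · a) ↑({a, b, c} : Finset α)ᶜ :=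
    (hf.apply_injOn_left a).mono fun x hx => (hS_ne x hx).1
  have hmaps : Set.MapsTo (f · a) ↑({a, b, c} : Finset α)ᶜ ↑({a, b, c} : Finset α)ᶜ := by
    intro x hx
    obtain ⟨hxa, hxb, hxc⟩ := hS_ne x hx
    have hca : f c a = b := hf.apply_apply_left hab
    simp only [coe_compl, Set.mem_compl_iff, mem_coe, mem_insert, mem_singleton, not_or]
    exact ⟨hf.ne_right hxa,
      fun h => hxc (hf.apply_injOn_left a hxa (hf.ne_left hab) (h.trans hca.symm)),
      fun h => hxb (hf.apply_injOn_left a hxa hab.symm (h.trans hba.symm))⟩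
  have hda := (hS_ne d hd).1
  have hea := (hS_ne e he).1
  rcases apply_eq_or_apply_eq_of_card_eq_three hS hinj hmaps
    (fun x hx => hf.ne_left (hS_ne x hx).1) hd he hde with h | h
  · exact Or.inr (hf.apply_eq_of_apply_eq hea.symm (hf.apply_eq_of_apply_eq hda h))
  · exact Or.inl (hf.apply_eq_of_apply_eq hda.symm (hf.apply_eq_of_apply_eq hea h))

theorem apply_ne_apply_swap {a b : α} (hab : a ≠ b) : f a b ≠ f b a := by
  intro hab'
  set c := f a b
  have hac : a ≠ c := (hf.ne_left hab).symm
  have hbc : b ≠ c := (hf.ne_right hab).symm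
  have hfbc : f b c = a := hf.apply_apply hab
  have hfcb : f c b = a := by rw [hab']; exact hf.apply_apply_left hab.symm
  have hfca : f c a = b := hf.apply_apply_left hab
  have hfac : f a c = b := by rw [hab']; exact hf.apply_apply hab.symm
  have habc : #({a, b, c} : Finset α) = 3 := card_eq_three.2 ⟨a, b, c, hab, hac, hbc, rfl⟩
  obtain ⟨d, hd, e, he, hde⟩ := one_lt_card.1 (by rw [card_compl, hcard, habc]; decide :
    1 < #({a, b, c} : Finset α)ᶜ)
  have hA := hf.apply_eq_or_apply_swap_eq hcard hab hab'.symm hd he hde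
  have hrot₁ : ({b, c, f b c} : Finset α) = {a, b, c} := by
    ext; simp only [hfbc, mem_insert, mem_singleton]; tauto
  have hrot₂ : ({c, a, f c a} : Finset α) = {a, b, c} := by
    ext; simp only [hfca, mem_insert, mem_singleton]; tauto
  have hB := hf.apply_eq_or_apply_swap_eq hcard hbc (hfcb.trans hfbc.symm)
    (by rwa [hrot₁]) (by rwa [hrot₁]) hde
  have hC := hf.apply_eq_or_apply_swap_eq hcard hac.symm (hfac.trans hfca.symm)
    (by rwa [hrot₂]) (by rwa [hrot₂]) hde
  have hsub : ({a, b, c} : Finset α) ⊆ {f d e, f e d} := by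
    simp only [insert_subset_iff, singleton_subset_iff, mem_insert, mem_singleton]
    exact ⟨hA.imp Eq.symm Eq.symm, hB.imp Eq.symm Eq.symm, hC.imp Eq.symm Eq.symm⟩
  have hle := (card_le_card hsub).trans card_le_two
  omega

end IsThirdVertexMap

set_option maxRecDepth 10000 in
theorem sign_prodComm_fin_six : sign (prodComm (Fin 6) (Fin 6) : Perm (Fin 6 × Fin 6)) = -1 := by
  decide

theorem not_isThirdVertexMap_fin_six (f : Fin 6 → Fin 6 → Fin 6) : ¬ IsThirdVertexMap f := by
  intro hf
  obtain ⟨u, hu⟩ : ∃ u, sign (hf.vertexPerm u) = -1 := by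
    by_contra! h
    have hprod := hf.prod_sign_vertexPerm
    rw [prod_eq_one fun u _ => (Int.units_eq_one_or _).resolve_right (h u),
      sign_prodComm_fin_six] at hprod
    exact absurd hprod (by decide)
  obtain ⟨x, y, hxy, h⟩ := hf.exists_apply_eq_apply_swap (Fintype.card_fin 6) hu
  exact hf.apply_ne_apply_swap (Fintype.card_fin 6) hxy h

def rotations {α : Type*} (t : α × α × α) : Multiset (α × α × α) :=
  {t, (t.2.1, t.2.2, t.1), (t.2.2, t.1, t.2.1)}

section rotations

variable {v : ℕ} {T : Multiset (Fin v × Fin v × Fin v)} {x y z : Fin v}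

theorem map_bind_rotations :
    (T.bind rotations).map (fun s => (s.1, s.2.1)) = T.bind mtsPairs := by
  rw [Multiset.map_bind]
  rfl

theorem mem_bind_rotations_rotate (h : (x, y, z) ∈ T.bind rotations) :
    (y, z, x) ∈ T.bind rotations := by
  simp only [Multiset.mem_bind, rotations, Multiset.insert_eq_cons, Multiset.mem_cons,
    Multiset.mem_singleton] at h ⊢
  obtain ⟨⟨a, b, c⟩, ht, h | h | h⟩ := h <;> simp only [Prod.mk.injEq] at h <;>
    obtain ⟨rfl, rfl, rfl⟩ := h <;> exact ⟨_, ht, by simp⟩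

end rotations

theorem isMTS_of_bind_mtsPairs_eq {v : ℕ} {T : Multiset (Fin v × Fin v × Fin v)}
    (hdist : ∀ t ∈ T, t.1 ≠ t.2.1 ∧ t.2.1 ≠ t.2.2 ∧ t.2.2 ≠ t.1)
    (hbind : T.bind mtsPairs = (univ : Finset (Fin v)).offDiag.val) : IsMTS T :=
  ⟨hdist, fun x y hxy => by
    rw [hbind]
    exact Multiset.count_eq_one_of_mem (Finset.nodup _) (by simp [hxy])⟩

namespace IsMTS

variable {v : ℕ} {T : Multiset (Fin v × Fin v × Fin v)} (hT : IsMTS T) {x y z z' : Fin v}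
include hT

theorem ne_of_mem_bind_rotations (h : (x, y, z) ∈ T.bind rotations) :
    x ≠ y ∧ y ≠ z ∧ z ≠ x := by
  simp only [Multiset.mem_bind, rotations, Multiset.insert_eq_cons, Multiset.mem_cons,
    Multiset.mem_singleton] at h
  obtain ⟨⟨a, b, c⟩, ht, h | h | h⟩ := h <;> simp only [Prod.mk.injEq] at h <;>
    obtain ⟨rfl, rfl, rfl⟩ := h <;> have := hT.1 _ ht <;> tauto

theorem exists_mem_bind_rotations (hxy : x ≠ y) : ∃ z, (x, y, z) ∈ T.bind rotations := by
  have h : (x, y) ∈ (T.bind rotations).map (fun s => (s.1, s.2.1)) := by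
    rw [map_bind_rotations, ← Multiset.count_pos, hT.2 x y hxy]
    exact one_pos
  obtain ⟨⟨x', y', z⟩, hs, hxy'⟩ := Multiset.mem_map.1 h
  obtain ⟨rfl, rfl⟩ := Prod.mk.inj hxy'
  exact ⟨z, hs⟩

theorem eq_of_mem_bind_rotations (h : (x, y, z) ∈ T.bind rotations)
    (h' : (x, y, z') ∈ T.bind rotations) : z = z' := by
  by_contra hzz'
  have hle : {(x, y, z), (x, y, z')} ≤ T.bind rotations :=
    (Multiset.le_iff_subset (by simp [hzz'])).2 (by simp [Multiset.cons_subset, h, h'])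
  have hcount :=
    Multiset.count_le_of_le (x, y) (Multiset.map_le_map (f := fun s => (s.1, s.2.1)) hle)
  rw [map_bind_rotations, hT.2 x y (hT.ne_of_mem_bind_rotations h).1] at hcount
  simp at hcount

theorem exists_isThirdVertexMap : ∃ f : Fin v → Fin v → Fin v, IsThirdVertexMap f := by
  have hex : ∀ x y : Fin v, ∃ z, x ≠ y → (x, y, z) ∈ T.bind rotations := fun x y =>
    if h : x = y then ⟨x, fun h' => absurd h h'⟩
    else (hT.exists_mem_bind_rotations h).imp fun _ hz _ => hz
  choose f hf using hex
  refine ⟨f, fun x y hxy => ?_⟩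
  have hxyz := hf x y hxy
  obtain ⟨-, hyz, hzx⟩ := hT.ne_of_mem_bind_rotations hxyz
  exact ⟨hzx, hyz.symm,
    hT.eq_of_mem_bind_rotations (hf y _ hyz) (mem_bind_rotations_rotate hxyz)⟩

end IsMTS

theorem not_isMTS_fin_six (T : Multiset (Fin 6 × Fin 6 × Fin 6)) : ¬ IsMTS T := fun hT =>
  let ⟨f, hf⟩ := hT.exists_isThirdVertexMap
  not_isThirdVertexMap_fin_six f hf

theorem no_directed_triangle_decomposition_K6 :
    ¬ ∃ T : Multiset (Fin 6 × Fin 6 × Fin 6),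
      (∀ t ∈ T, t.1 ≠ t.2.1 ∧ t.2.1 ≠ t.2.2 ∧ t.2.2 ≠ t.1) ∧
      T.bind mtsPairs =
        ((Finset.univ ×ˢ Finset.univ).filter fun p : Fin 6 × Fin 6 => p.1 ≠ p.2).val := by
  rintro ⟨T, hdist, hbind⟩
  exact not_isMTS_fin_six T (isMTS_of_bind_mtsPairs_eq hdist hbind)
end

section
/- The collection of cyclic triples {(0,2,1),(0,1,6),(0,3,2),(0,7,3),(0,4,7),(0,8,4),(0,6,5),(0,5,8),(1,2,7),(1,3,6),(1,8,3),(1,5,4),(1,4,8),(1,7,5),(2,3,8),(2,4,6),(2,6,4),(2,5,7),(2,8,5),(3,4,5),(3,7,4),(3,5,6),(6,7,8),(6,8,7)} on point set {0,1,...,8} is a Mendelsohn triple system of order 9, and the permutation [0,2,3,4,7,1,8,5,6] is a 4-good sequencing of it. -/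
/-! A cyclic triple contains three ordered pairs, so the 24 triples contain 72 = 9 · 8 ordered
pairs counted with multiplicity: exactly as many as there are ordered pairs of distinct points.
Hence it suffices to check that every such pair is covered at least once. -/

theorem card_mtsPairs {v : ℕ} (t : Fin v × Fin v × Fin v) : Multiset.card (mtsPairs t) = 3 :=
  rfl

theorem card_bind_mtsPairs {v : ℕ} (T : Multiset (Fin v × Fin v × Fin v)) :
    Multiset.card (T.bind mtsPairs) = 3 * Multiset.card T := by
  simp [Multiset.card_bind, Function.comp_def, card_mtsPairs, mul_comm]

theorem isMTS_of_forall_mem_bind_mtsPairs {v : ℕ} (T : Multiset (Fin v × Fin v × Fin v))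
    (hdistinct : ∀ t ∈ T, t.1 ≠ t.2.1 ∧ t.2.1 ≠ t.2.2 ∧ t.2.2 ≠ t.1)
    (hcard : 3 * Multiset.card T = v * (v - 1))
    (hcover : ∀ x y : Fin v, x ≠ y → (x, y) ∈ T.bind mtsPairs) : IsMTS T := by
  set S := (Finset.univ : Finset (Fin v)).offDiag
  have hS_le : S.val ≤ T.bind mtsPairs :=
    (Multiset.le_iff_subset S.nodup).2 fun p hp => hcover p.1 p.2 (by simpa [S] using hp)
  have hS_card : Multiset.card (T.bind mtsPairs) ≤ Multiset.card S.val := by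
    rw [card_bind_mtsPairs, hcard, Finset.card_val, Finset.offDiag_card, Finset.card_univ,
      Fintype.card_fin, Nat.mul_sub_one]
  have hS_eq : S.val = T.bind mtsPairs := Multiset.eq_of_le_of_card_le hS_le hS_card
  refine ⟨hdistinct, fun x y hxy => ?_⟩
  rw [← hS_eq]
  exact Multiset.count_eq_one_of_mem S.nodup (by simp [S, hxy])

def mts9 : Multiset (Fin 9 × Fin 9 × Fin 9) :=
  {(0,2,1),(0,1,6),(0,3,2),(0,7,3),(0,4,7),(0,8,4),(0,6,5),(0,5,8),(1,2,7),(1,3,6),(1,8,3),(1,5,4),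
    (1,4,8),(1,7,5),(2,3,8),(2,4,6),(2,6,4),(2,5,7),(2,8,5),(3,4,5),(3,7,4),(3,5,6),(6,7,8),(6,8,7)}

set_option maxRecDepth 10000 in
theorem isMTS_mts9 : IsMTS mts9 :=
  isMTS_of_forall_mem_bind_mtsPairs mts9 (by decide) rfl (by unfold mtsPairs; decide)

set_option maxRecDepth 10000 in
theorem isGoodSeq_four_mts9 : IsGoodSeq 4 mts9 [0,2,3,4,7,1,8,5,6] := by
  unfold IsGoodSeq; decide

theorem mts9_example_and_four_good_seq :
    IsMTS ({(0,2,1),(0,1,6),(0,3,2),(0,7,3),(0,4,7),(0,8,4),(0,6,5),(0,5,8),(1,2,7),(1,3,6),(1,8,3),(1,5,4),(1,4,8),(1,7,5),(2,3,8),(2,4,6),(2,6,4),(2,5,7),(2,8,5),(3,4,5),(3,7,4),(3,5,6),(6,7,8),(6,8,7)} : Multiset (Fin 9 × Fin 9 × Fin 9)) ∧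
    IsGoodSeq 4 ({(0,2,1),(0,1,6),(0,3,2),(0,7,3),(0,4,7),(0,8,4),(0,6,5),(0,5,8),(1,2,7),(1,3,6),(1,8,3),(1,5,4),(1,4,8),(1,7,5),(2,3,8),(2,4,6),(2,6,4),(2,5,7),(2,8,5),(3,4,5),(3,7,4),(3,5,6),(6,7,8),(6,8,7)} : Multiset (Fin 9 × Fin 9 × Fin 9))
      ([0,2,3,4,7,1,8,5,6] : List (Fin 9)) :=
  ⟨isMTS_mts9, isGoodSeq_four_mts9⟩
end

section
/- The permutation [0,1,2,4,3,5,6,8,7,9] is a 3-good sequencing of the Mendelsohn triple system of order 10 with triples {(0,1,8),(0,9,1),(0,5,2),(0,2,7),(0,4,3),(0,3,6),(0,7,4),(0,6,5),(0,8,9),(1,2,3),(1,3,2),(1,4,5),(1,5,4),(1,6,7),(1,7,6),(1,9,8),(2,6,4),(2,4,8),(2,5,9),(2,8,6),(2,9,7),(3,4,9),(3,7,5),(3,5,8),(3,9,6),(3,8,7),(4,6,8),(4,7,9),(5,6,9),(5,7,8)}. -/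
/-
For `ℓ = 3` a forbidden configuration is a cyclic rotation of a triple occupying three consecutive
positions of the sequencing, in order. So it suffices to check that none of the eight consecutive
windows `(0,1,2), (1,2,4), …, (8,7,9)` of the sequence is a rotation of a triple of the system.
-/

section ConsecutiveTriples

variable {α : Type*}

def consecutiveTriples (xs : List α) : List (α × α × α) :=
  xs.zip (xs.tail.zip xs.tail.tail)

def rotateTriple (t : α × α × α) : α × α × α :=
  (t.2.1, t.2.2, t.1)

theorem mem_consecutiveTriples {xs : List α} (i : ℕ) (h : i + 2 < xs.length) :
    (xs[i], xs[i + 1], xs[i + 2]) ∈ consecutiveTriples xs := by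
  have hi : i < (consecutiveTriples xs).length := by
    simp only [consecutiveTriples, List.length_zip, List.length_tail]
    omega
  convert List.getElem_mem hi using 1
  simp [consecutiveTriples, List.getElem_tail]

theorem mem_consecutiveTriples_of_idxOf [DecidableEq α] {xs : List α} {x y z : α}
    (hz : z ∈ xs) (hxy : xs.idxOf x < xs.idxOf y) (hyz : xs.idxOf y < xs.idxOf z)
    (hspan : xs.idxOf z - xs.idxOf x + 1 ≤ 3) :
    (x, y, z) ∈ consecutiveTriples xs := by
  have hz_lt : xs.idxOf z < xs.length := List.idxOf_lt_length_iff.2 hz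
  have hy_idx : xs.idxOf y = xs.idxOf x + 1 := by omega
  have hz_idx : xs.idxOf z = xs.idxOf x + 2 := by omega
  have hwin := mem_consecutiveTriples (xs := xs) (xs.idxOf x) (by omega)
  simpa only [← hy_idx, ← hz_idx, List.getElem_idxOf] using hwin

end ConsecutiveTriples

theorem isGoodSeq_three_of_consecutiveTriples {v : ℕ} {T : Multiset (Fin v × Fin v × Fin v)}
    {xs : List (Fin v)} (hperm : xs.Perm (List.finRange v))
    (hwin : ∀ w ∈ consecutiveTriples xs,
      w ∉ T ∧ rotateTriple w ∉ T ∧ rotateTriple (rotateTriple w) ∉ T) :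
    IsGoodSeq 3 T xs := by
  have hmem (x : Fin v) : x ∈ xs := hperm.mem_iff.2 (List.mem_finRange x)
  refine ⟨hperm, fun t ht => ⟨?_, ?_, ?_⟩⟩ <;> rintro ⟨hxy, hyz, hspan⟩
  · exact (hwin t (mem_consecutiveTriples_of_idxOf (hmem _) hxy hyz hspan)).1 ht
  · exact (hwin (rotateTriple t)
      (mem_consecutiveTriples_of_idxOf (hmem _) hxy hyz hspan)).2.2 ht
  · exact (hwin (rotateTriple (rotateTriple t))
      (mem_consecutiveTriples_of_idxOf (hmem _) hxy hyz hspan)).2.1 ht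

set_option maxRecDepth 10000 in
theorem mts10_three_good_seq :
    IsGoodSeq 3 ({(0,1,8),(0,9,1),(0,5,2),(0,2,7),(0,4,3),(0,3,6),(0,7,4),(0,6,5),(0,8,9),(1,2,3),(1,3,2),(1,4,5),(1,5,4),(1,6,7),(1,7,6),(1,9,8),(2,6,4),(2,4,8),(2,5,9),(2,8,6),(2,9,7),(3,4,9),(3,7,5),(3,5,8),(3,9,6),(3,8,7),(4,6,8),(4,7,9),(5,6,9),(5,7,8)} : Multiset (Fin 10 × Fin 10 × Fin 10))
      ([0,1,2,4,3,5,6,8,7,9] : List (Fin 10)) :=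
  isGoodSeq_three_of_consecutiveTriples (by decide) (by decide)
end

section
/- Let M be the Mendelsohn triple system of order 10 with triples {(0,1,8),(0,9,1),(0,5,2),(0,2,7),(0,4,3),(0,3,6),(0,7,4),(0,6,5),(0,8,9),(1,2,3),(1,3,2),(1,4,5),(1,5,4),(1,6,7),(1,7,6),(1,9,8),(2,6,4),(2,4,8),(2,5,9),(2,8,6),(2,9,7),(3,4,9),(3,7,5),(3,5,8),(3,9,6),(3,8,7),(4,6,8),(4,7,9),(5,6,9),(5,7,8)}. Then the partial system obtained by removing the triple (0,1,8) from M admits the 4-good sequencing [0,1,2,4,7,6,5,9,3,8]. -/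
/-! The sequencing `[0,1,2,4,7,6,5,9,3,8]` is already 4-good for the whole system `M`, which a
finite check confirms, and deleting triples cannot destroy goodness. -/

theorem IsGoodSeq.mono {v ℓ : ℕ} {S T : Multiset (Fin v × Fin v × Fin v)} {xs : List (Fin v)}
    (h : IsGoodSeq ℓ T xs) (hST : S ⊆ T) : IsGoodSeq ℓ S xs :=
  ⟨h.1, fun t ht => h.2 t (hST ht)⟩

def mts10 : Multiset (Fin 10 × Fin 10 × Fin 10) :=
  {(0,1,8),(0,9,1),(0,5,2),(0,2,7),(0,4,3),(0,3,6),(0,7,4),(0,6,5),(0,8,9),(1,2,3),(1,3,2),(1,4,5),(1,5,4),(1,6,7),(1,7,6),(1,9,8),(2,6,4),(2,4,8),(2,5,9),(2,8,6),(2,9,7),(3,4,9),(3,7,5),(3,5,8),(3,9,6),(3,8,7),(4,6,8),(4,7,9),(5,6,9),(5,7,8)}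

instance {v ℓ : ℕ} (T : Multiset (Fin v × Fin v × Fin v)) (xs : List (Fin v)) :
    Decidable (IsGoodSeq ℓ T xs) := by
  unfold IsGoodSeq; infer_instance

theorem mts10_isGoodSeq : IsGoodSeq 4 mts10 [0,1,2,4,7,6,5,9,3,8] := by
  decide +kernel

theorem mts10_partial_four_good_seq :
    IsGoodSeq 4
      (({(0,1,8),(0,9,1),(0,5,2),(0,2,7),(0,4,3),(0,3,6),(0,7,4),(0,6,5),(0,8,9),(1,2,3),(1,3,2),(1,4,5),(1,5,4),(1,6,7),(1,7,6),(1,9,8),(2,6,4),(2,4,8),(2,5,9),(2,8,6),(2,9,7),(3,4,9),(3,7,5),(3,5,8),(3,9,6),(3,8,7),(4,6,8),(4,7,9),(5,6,9),(5,7,8)} : Multiset (Fin 10 × Fin 10 × Fin 10)).erase (0,1,8))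
      ([0,1,2,4,7,6,5,9,3,8] : List (Fin 10)) :=
  mts10_isGoodSeq.mono (Multiset.erase_subset _ _)
end
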